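/- Let f(z) = z + a₂z² + ⋯ satisfy z f'(z) = p(z) f(z) with p(z) = 1 + c₁z + ⋯ analytic on the unit disk. Then for real ξ, ζ with 1 - 2ξ - 2ζ ≠ 0, a₅ - ξ a₂a₄ - ζ a₃² = c₄/4 + (1-ξ)c₃c₁/3 + (1-2ζ)c₂²/8 + (1-2ξ-2ζ)(c₁²/4)·(c₂ + ((1-4ξ-6ζ)/(3(1-2ξ-2ζ)))·(c₁²/2)). -/

import Mathlib

/-!
Comparing coefficients in `z f' = p f` gives the recurrence `n aₙ = ∑_{k ≤ n} cₖ a_{n-k}`, i.e.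
`(n - 1) aₙ = c₁ a_{n-1} + ⋯ + c_{n-1} a₁`, which determines `a₂, …, a₅` as polynomials in
`c₁, …, c₄`. The identity is then polynomial algebra once the factor `1 - 2ξ - 2ζ` in front of
the quotient is cancelled.
-/

open Complex Metric FormalMultilinearSeries
open scoped ENNReal NNReal

section PowerSeries

variable {𝕜 : Type*} [DenselyNormedField 𝕜] {b d : ℕ → 𝕜} {g : 𝕜 → 𝕜} {r : ℝ≥0}

theorem hasFPowerSeriesOnBall_ofScalars_of_hasSum (hr : 0 < r)
    (hb : ∀ z ∈ ball (0 : 𝕜) r, HasSum (fun n => b n * z ^ n) (g z)) :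
    HasFPowerSeriesOnBall g (ofScalars 𝕜 b) 0 r := by
  refine ⟨ENNReal.le_of_forall_nnreal_lt fun s hs => ?_, by exact_mod_cast hr, fun {y} hy => ?_⟩
  · obtain ⟨z, hsz, hzr⟩ := NormedField.exists_lt_nnnorm_lt 𝕜 (ENNReal.coe_lt_coe.mp hs)
    have hz : z ∈ ball (0 : 𝕜) r := mem_ball_zero_iff.mpr hzr
    refine (ENNReal.coe_le_coe.mpr hsz.le).trans
      ((ofScalars 𝕜 b).le_radius_of_tendsto (l := 0) ?_)
    simpa [ofScalars_norm] using (hb z hz).summable.tendsto_atTop_zero.norm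
  · rw [zero_add]
    refine (hb y ?_).congr_fun fun n => by rw [ofScalars_apply_eq, smul_eq_mul]
    simpa [← Metric.eball_coe] using hy

theorem eq_of_forall_hasSum_pow_mul (hr : 0 < r)
    (hb : ∀ z ∈ ball (0 : 𝕜) r, HasSum (fun n => b n * z ^ n) (g z))
    (hd : ∀ z ∈ ball (0 : 𝕜) r, HasSum (fun n => d n * z ^ n) (g z)) : b = d :=
  (ofScalars_series_eq_iff 𝕜 b d).mp <|
    (hasFPowerSeriesOnBall_ofScalars_of_hasSum hr hb).hasFPowerSeriesAt.eq_formalMultilinearSeries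
      (hasFPowerSeriesOnBall_ofScalars_of_hasSum hr hd).hasFPowerSeriesAt

variable [CompleteSpace 𝕜]

theorem hasSum_mul_deriv_of_hasSum
    (hb : ∀ z ∈ ball (0 : 𝕜) r, HasSum (fun n => b n * z ^ n) (g z))
    {z : 𝕜} (hz : z ∈ ball (0 : 𝕜) r) :
    HasSum (fun n => n * b n * z ^ n) (z * deriv g z) := by
  have hr : 0 < r := by simpa using pos_of_mem_ball hz
  have hderiv := ((hasFPowerSeriesOnBall_ofScalars_of_hasSum hr hb).fderiv.hasSum
    (y := z) (by simpa [← Metric.eball_coe] using hz)).mapL (ContinuousLinearMap.apply 𝕜 𝕜 z)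
  have hfz : fderiv 𝕜 g z z = z * deriv g z := by
    rw [← fderiv_apply_one_eq_deriv, ← smul_eq_mul, ← map_smul, smul_eq_mul, mul_one]
  rw [ContinuousLinearMap.apply_apply, zero_add, hfz] at hderiv
  refine (hasSum_nat_add_iff' 1).mp ?_
  rw [Finset.sum_range_one, Nat.cast_zero, zero_mul, zero_mul, sub_zero]
  refine hderiv.congr_fun fun n => ?_
  rw [ContinuousLinearMap.apply_apply, derivSeries_apply_diag, ofScalars_apply_eq, nsmul_eq_mul,
    smul_eq_mul, pow_succ]
  push_cast
  ring

theorem hasSum_mul_of_hasSum (hb : ∀ z ∈ ball (0 : 𝕜) r, HasSum (fun n => b n * z ^ n) (g z))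
    {q : 𝕜 → 𝕜} (hd : ∀ z ∈ ball (0 : 𝕜) r, HasSum (fun n => d n * z ^ n) (q z))
    {z : 𝕜} (hz : z ∈ ball (0 : 𝕜) r) :
    HasSum (fun n => (∑ k ∈ Finset.range (n + 1), b k * d (n - k)) * z ^ n) (g z * q z) := by
  have hr : 0 < r := by simpa using pos_of_mem_ball hz
  have hzr : (‖z‖₊ : ℝ≥0∞) < r := by simpa [← Metric.eball_coe] using hz
  have summable_norm {e : ℕ → 𝕜} {k : 𝕜 → 𝕜}
      (he : ∀ w ∈ ball (0 : 𝕜) r, HasSum (fun n => e n * w ^ n) (k w)) :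
      Summable fun n => ‖e n * z ^ n‖ := by
    simpa [ofScalars_norm] using (ofScalars 𝕜 e).summable_norm_mul_pow
      (hzr.trans_le (hasFPowerSeriesOnBall_ofScalars_of_hasSum hr he).r_le)
  have hprod := hasSum_sum_range_mul_of_summable_norm (summable_norm hb) (summable_norm hd)
  rw [(hb z hz).tsum_eq, (hd z hz).tsum_eq] at hprod
  refine hprod.congr_fun fun n => ?_
  rw [Finset.sum_mul]
  refine Finset.sum_congr rfl fun k hk => ?_
  rw [← Nat.add_sub_cancel' (Nat.lt_succ_iff.mp (Finset.mem_range.mp hk)), pow_add]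
  simp only [Nat.add_sub_cancel_left]
  ring

theorem natCast_mul_coeff_eq_of_mul_deriv_eq_mul {f p : 𝕜 → 𝕜} {a c : ℕ → 𝕜} (hr : 0 < r)
    (hf : ∀ z ∈ ball (0 : 𝕜) r, HasSum (fun n => a n * z ^ n) (f z))
    (hp : ∀ z ∈ ball (0 : 𝕜) r, HasSum (fun n => c n * z ^ n) (p z))
    (hode : ∀ z ∈ ball (0 : 𝕜) r, z * deriv f z = p z * f z) (n : ℕ) :
    n * a n = ∑ k ∈ Finset.range (n + 1), c k * a (n - k) :=
  congrFun (eq_of_forall_hasSum_pow_mul hr (fun _ hz => hasSum_mul_deriv_of_hasSum hf hz)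
    (fun z hz => hode z hz ▸ hasSum_mul_of_hasSum hp hf hz)) n

end PowerSeries

theorem fifth_coeff_functional_of_recurrence {K : Type*} [Field K] [CharZero K] {a c : ℕ → K}
    (ha0 : a 0 = 0) (ha1 : a 1 = 1) (hc0 : c 0 = 1)
    (hrec : ∀ n : ℕ, (n : K) * a n = ∑ k ∈ Finset.range (n + 1), c k * a (n - k))
    {ξ ζ : K} (h : 1 - 2 * ξ - 2 * ζ ≠ 0) :
    a 5 - ξ * (a 2 * a 4) - ζ * a 3 ^ 2 = c 4 / 4 + (1 - ξ) * (c 3 * c 1) / 3 +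
      (1 - 2 * ζ) * c 2 ^ 2 / 8 + (1 - 2 * ξ - 2 * ζ) * (c 1 ^ 2 / 4) *
        (c 2 + ((1 - 4 * ξ - 6 * ζ) / (3 * (1 - 2 * ξ - 2 * ζ))) * (c 1 ^ 2 / 2)) := by
  have e2 := hrec 2
  have e3 := hrec 3
  have e4 := hrec 4
  have e5 := hrec 5
  norm_num [Finset.sum_range_succ, ha0, ha1, hc0] at e2 e3 e4 e5
  have h2 : a 2 = c 1 := by linear_combination e2
  have h3 : a 3 = (c 2 + c 1 ^ 2) / 2 := by linear_combination e3 / 2 + (c 1 / 2) * h2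
  have h4 : a 4 = c 3 / 3 + c 1 * c 2 / 2 + c 1 ^ 3 / 6 := by
    linear_combination e4 / 3 + (c 1 / 3) * h3 + (c 2 / 3) * h2
  have h5 : a 5 = c 4 / 4 + c 1 * c 3 / 3 + c 1 ^ 2 * c 2 / 4 + c 1 ^ 4 / 24 + c 2 ^ 2 / 8 := by
    linear_combination e5 / 4 + (c 1 / 4) * h4 + (c 2 / 4) * h3 + (c 3 / 4) * h2
  have hsplit : (1 - 2 * ξ - 2 * ζ) * ((1 - 4 * ξ - 6 * ζ) / (3 * (1 - 2 * ξ - 2 * ζ))) =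
      (1 - 4 * ξ - 6 * ζ) / 3 := by
    field_simp
  rw [h5, h4, h3, h2]
  linear_combination (-c 1 ^ 4 / 8) * hsplit

theorem stmt_11 (f : ℂ → ℂ) (a : ℕ → ℂ)
    (ha0 : a 0 = 0) (ha1 : a 1 = 1)
    (hfsum : ∀ z ∈ Metric.ball (0:ℂ) 1, HasSum (fun n => a n * z ^ n) (f z))
    (p : ℂ → ℂ) (c : ℕ → ℂ)
    (hc0 : c 0 = 1)
    (hsum : ∀ z ∈ Metric.ball (0:ℂ) 1, HasSum (fun n => c n * z ^ n) (p z))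
    (hode : ∀ z ∈ Metric.ball (0:ℂ) 1, z * deriv f z = p z * f z)
    (ξ ζ : ℝ) (h : 1 - 2*ξ - 2*ζ ≠ 0) :
    a 5 - (ξ:ℂ) * (a 2 * a 4) - (ζ:ℂ) * (a 3) ^ 2 = c 4 / 4 + ((1:ℂ) - ξ) * (c 3 * c 1) / 3 + ((1:ℂ) - 2*ζ) * (c 2) ^ 2 / 8 + ((1:ℂ) - 2*ξ - 2*ζ) * (c 1 ^ 2 / 4) * (c 2 + (((1:ℂ) - 4*ξ - 6*ζ) / (3*((1:ℂ) - 2*ξ - 2*ζ))) * (c 1 ^ 2 / 2)) := by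
  have hrec := natCast_mul_coeff_eq_of_mul_deriv_eq_mul (f := f) (p := p) (r := 1) one_pos
    (by simpa using hfsum) (by simpa using hsum) (by simpa using hode)
  exact fifth_coeff_functional_of_recurrence ha0 ha1 hc0 hrec (by exact_mod_cast h)
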